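/- arXiv:1807.02317 — 3 statements merged into one kernel-verified Lean document; each statement's English description precedes it below -/
import Mathlib

section
/- Let V, g, η, L, ℓ, φ, ħ be as above, let k ∈ ℝ, let C : V → ℝ be linear with C(η) = 0, and let B : V × V → ℝ be bilinear and indicatory (B(X,Y) = B(φX, φY)). Define R(X,Y,Z,W) := 𝔄_{X,Y}{ ħ(Y,W)[ ℓ(Z)(kℓ(X) + (1/3)C(X)) + (1/3)B(Z,X) + (2/3)ℓ(X)C(Z) + kħ(Z,X) ] + (1/3)ℓ(X)C(Y)ħ(Z,W) + L⁻¹ħ(X,Z)ℓ(W)(kℓ(Y) + (1/3)C(Y)) }, where 𝔄_{X,Y} denotes antisymmetrization in X, Y. Then (P·R)(X,Y,Z,W) := R(φX, φY, φZ, φW) = 𝔄_{X,Y}{ ħ(Y,W)( (1/3)B(Z,X) + kħ(Z,X) ) }. -/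
open RealInnerProductSpace

/-! With `u = η / L` a unit vector, `ℓ = ⟪u, ·⟫` and `φ` is the orthogonal projection onto `u⊥`,
so `ℓ ∘ φ = 0`, `ħ(φX, φY) = ⟪φX, φY⟫ = ħ(X, Y)`, and `B` is unchanged by `φ` by indicatority.
Substituting these into `R(φX, φY, φZ, φW)` kills every term carrying a factor `ℓ`, leaving the
claimed expression. -/

section Projection

variable {V : Type*} [NormedAddCommGroup V] [InnerProductSpace ℝ V]
  {η : V} {L : ℝ} {ell : V → ℝ}

theorem inner_eq_mul_of_eq_inv_mul (hL : L ≠ 0) (hell : ∀ X, ell X = L⁻¹ * ⟪η, X⟫) (X : V) :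
    ⟪η, X⟫ = L * ell X := by
  rw [hell]; field_simp

variable (hL : L ≠ 0) (hη : ⟪η, η⟫ = L ^ 2) (hell : ∀ X, ell X = L⁻¹ * ⟪η, X⟫)
include hL hη hell

theorem ell_sub_smul_eq_zero (X : V) : ell (X - (L⁻¹ * ell X) • η) = 0 := by
  rw [hell, inner_sub_right, real_inner_smul_right, hη,
    inner_eq_mul_of_eq_inv_mul hL hell]
  field_simp
  ring

theorem inner_sub_smul_sub_smul (X Y : V) :
    ⟪X - (L⁻¹ * ell X) • η, Y - (L⁻¹ * ell Y) • η⟫ = ⟪X, Y⟫ - ell X * ell Y := by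
  have horth : ⟪X - (L⁻¹ * ell X) • η, η⟫ = 0 := by
    rw [real_inner_comm, inner_eq_mul_of_eq_inv_mul hL hell, ell_sub_smul_eq_zero hL hη hell,
      mul_zero]
  rw [inner_sub_right, real_inner_smul_right, horth, mul_zero, sub_zero, inner_sub_left,
    real_inner_smul_left, inner_eq_mul_of_eq_inv_mul hL hell]
  field_simp

end Projection

theorem stmt_6_general {V : Type*} [NormedAddCommGroup V] [InnerProductSpace ℝ V]
    (η : V) (L : ℝ) (hL : 0 < L) (hη : ⟪η, η⟫ = L ^ 2)
    (ell : V → ℝ) (hell : ∀ X, ell X = L⁻¹ * ⟪η, X⟫)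
    (φ : V → V) (hφ : ∀ X, φ X = X - (L⁻¹ * ell X) • η)
    (hbar : V → V → ℝ) (hhbar : ∀ X Y, hbar X Y = ⟪X, Y⟫ - ell X * ell Y)
    (k : ℝ) (C : V →ₗ[ℝ] ℝ)
    (B : V →ₗ[ℝ] V →ₗ[ℝ] ℝ) (hBind : ∀ X Y, B X Y = B (φ X) (φ Y))
    (R : V → V → V → V → ℝ)
    (hR : ∀ X Y Z W, R X Y Z W =
      (hbar Y W * (ell Z * (k * ell X + (1/3) * C X) + (1/3) * B Z X
          + (2/3) * ell X * C Z + k * hbar Z X)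
        + (1/3) * ell X * C Y * hbar Z W
        + L⁻¹ * hbar X Z * ell W * (k * ell Y + (1/3) * C Y))
      - (hbar X W * (ell Z * (k * ell Y + (1/3) * C Y) + (1/3) * B Z Y
          + (2/3) * ell Y * C Z + k * hbar Z Y)
        + (1/3) * ell Y * C X * hbar Z W
        + L⁻¹ * hbar Y Z * ell W * (k * ell X + (1/3) * C X))) :
    ∀ X Y Z W, R (φ X) (φ Y) (φ Z) (φ W)
      = hbar Y W * ((1/3) * B Z X + k * hbar Z X)
        - hbar X W * ((1/3) * B Z Y + k * hbar Z Y) := by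
  have ell_φ : ∀ X, ell (φ X) = 0 := fun X => by
    rw [hφ]; exact ell_sub_smul_eq_zero hL.ne' hη hell X
  have hbar_φ : ∀ X Y, hbar (φ X) (φ Y) = hbar X Y := fun X Y => by
    rw [hhbar, hhbar, ell_φ, ell_φ, hφ, hφ, inner_sub_smul_sub_smul hL.ne' hη hell]
    ring
  intro X Y Z W
  rw [hR]
  simp only [ell_φ, hbar_φ, ← hBind]
  ring

theorem stmt_6 {V : Type*} [NormedAddCommGroup V] [InnerProductSpace ℝ V]
    (η : V) (L : ℝ) (hL : 0 < L) (hη : ⟪η, η⟫ = L ^ 2)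
    (ell : V → ℝ) (hell : ∀ X, ell X = L⁻¹ * ⟪η, X⟫)
    (φ : V → V) (hφ : ∀ X, φ X = X - (L⁻¹ * ell X) • η)
    (hbar : V → V → ℝ) (hhbar : ∀ X Y, hbar X Y = ⟪X, Y⟫ - ell X * ell Y)
    (k : ℝ) (C : V →ₗ[ℝ] ℝ) (hCη : C η = 0)
    (B : V →ₗ[ℝ] V →ₗ[ℝ] ℝ) (hBind : ∀ X Y, B X Y = B (φ X) (φ Y))
    (R : V → V → V → V → ℝ)
    (hR : ∀ X Y Z W, R X Y Z W =
      (hbar Y W * (ell Z * (k * ell X + (1/3) * C X) + (1/3) * B Z X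
          + (2/3) * ell X * C Z + k * hbar Z X)
        + (1/3) * ell X * C Y * hbar Z W
        + L⁻¹ * hbar X Z * ell W * (k * ell Y + (1/3) * C Y))
      - (hbar X W * (ell Z * (k * ell Y + (1/3) * C Y) + (1/3) * B Z Y
          + (2/3) * ell Y * C Z + k * hbar Z Y)
        + (1/3) * ell Y * C X * hbar Z W
        + L⁻¹ * hbar Y Z * ell W * (k * ell X + (1/3) * C X))) :
    ∀ X Y Z W, R (φ X) (φ Y) (φ Z) (φ W)
      = hbar Y W * ((1/3) * B Z X + k * hbar Z X)
        - hbar X W * ((1/3) * B Z Y + k * hbar Z Y) :=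
  stmt_6_general η L hL hη ell hell φ hφ hbar hhbar k C B hBind R hR
end

section
/- In the setting of the previous statement, the tensor R is of H_p-scalar-curvature type with scalar ε, i.e. (P·R)(X,Y,Z,W) = ε·𝔄_{X,Y}{ħ(X,Z)ħ(Y,W)} for all X,Y,Z,W, if and only if B(X,Y) = 3(ε − k)·ħ(X,Y) for all X,Y (assuming dim V ≥ 4 and B symmetric). -/
/-! On the horizontal subspace `ker ℓ` every `ℓ`-term of `R` vanishes, so there
`R(X,Y,Z,W) = ħ(Y,W)(B(Z,X)/3 + k ħ(Z,X)) − ħ(X,W)(B(Z,Y)/3 + k ħ(Z,Y))`, and `φ` maps onto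
`ker ℓ` preserving `ħ` and `B`. Sufficiency is then a direct computation. For necessity, take
`v ≠ 0` orthogonal to `η` and `Y` (possible as `dim V ≥ 3`); evaluating the curvature identity
at `(Y, v, X, v)` leaves `ħ(v,v)(B(X,Y)/3 + k ħ(X,Y)) = ε ħ(v,v) ħ(X,Y)` with `ħ(v,v) = ‖v‖² ≠ 0`. -/

open RealInnerProductSpace Module

section InnerProductSpace

variable {V : Type*} [NormedAddCommGroup V] [InnerProductSpace ℝ V]

lemma exists_ne_zero_inner_eq_zero_inner_eq_zero [FiniteDimensional ℝ V]
    (h : 2 < finrank ℝ V) (a b : V) : ∃ v ≠ 0, ⟪a, v⟫ = 0 ∧ ⟪b, v⟫ = 0 := by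
  let f : V →ₗ[ℝ] ℝ × ℝ := (innerₛₗ ℝ a).prod (innerₛₗ ℝ b)
  have hker : LinearMap.ker f ≠ ⊥ :=
    LinearMap.ker_ne_bot_of_finrank_lt (by simpa using h)
  obtain ⟨v, hv, hv0⟩ := Submodule.exists_mem_ne_zero_of_ne_bot hker
  rw [LinearMap.mem_ker] at hv
  exact ⟨v, hv0, congrArg Prod.fst hv, congrArg Prod.snd hv⟩

variable {η : V} {L : ℝ} {ell : V → ℝ} {φ : V → V} {hbar : V → V → ℝ}

lemma ell_phi_eq_zero (hL : L ≠ 0) (hη : ⟪η, η⟫ = L ^ 2)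
    (hell : ∀ X, ell X = L⁻¹ * ⟪η, X⟫) (hφ : ∀ X, φ X = X - (L⁻¹ * ell X) • η) (X : V) :
    ell (φ X) = 0 := by
  rw [hell, hφ, inner_sub_right, inner_smul_right, hη, hell]
  field_simp
  ring

lemma inner_phi_phi (hL : L ≠ 0) (hη : ⟪η, η⟫ = L ^ 2)
    (hell : ∀ X, ell X = L⁻¹ * ⟪η, X⟫) (hφ : ∀ X, φ X = X - (L⁻¹ * ell X) • η)
    (hhbar : ∀ X Y, hbar X Y = ⟪X, Y⟫ - ell X * ell Y) (X Y : V) :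
    ⟪φ X, φ Y⟫ = hbar X Y := by
  rw [hφ X, hφ Y, inner_sub_left, inner_sub_right, inner_sub_right, inner_smul_left,
    inner_smul_right, inner_smul_right, inner_smul_left, hη, hhbar, hell X, hell Y,
    real_inner_comm η X]
  field_simp
  ring

lemma hbar_phi_phi (hL : L ≠ 0) (hη : ⟪η, η⟫ = L ^ 2)
    (hell : ∀ X, ell X = L⁻¹ * ⟪η, X⟫) (hφ : ∀ X, φ X = X - (L⁻¹ * ell X) • η)
    (hhbar : ∀ X Y, hbar X Y = ⟪X, Y⟫ - ell X * ell Y) (X Y : V) :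
    hbar (φ X) (φ Y) = hbar X Y := by
  rw [hhbar, ell_phi_eq_zero hL hη hell hφ, ell_phi_eq_zero hL hη hell hφ,
    inner_phi_phi hL hη hell hφ hhbar, mul_zero, sub_zero]

lemma hbar_comm (hhbar : ∀ X Y, hbar X Y = ⟪X, Y⟫ - ell X * ell Y) (X Y : V) :
    hbar X Y = hbar Y X := by
  rw [hhbar, hhbar, real_inner_comm, mul_comm]

lemma hbar_self_ne_zero (hhbar : ∀ X Y, hbar X Y = ⟪X, Y⟫ - ell X * ell Y) {v : V}
    (hv : v ≠ 0) (hellv : ell v = 0) : hbar v v ≠ 0 := by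
  rw [hhbar, hellv, mul_zero, sub_zero]
  exact inner_self_ne_zero.mpr hv

end InnerProductSpace

lemma R_eq_of_ell_eq_zero {V : Type*} {L k : ℝ} {ell : V → ℝ} {hbar : V → V → ℝ}
    {C : V → ℝ} {B : V → V → ℝ} {R : V → V → V → V → ℝ}
    (hR : ∀ X Y Z W, R X Y Z W =
      (hbar Y W * (ell Z * (k * ell X + (1/3) * C X) + (1/3) * B Z X
          + (2/3) * ell X * C Z + k * hbar Z X)
        + (1/3) * ell X * C Y * hbar Z W
        + L⁻¹ * hbar X Z * ell W * (k * ell Y + (1/3) * C Y))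
      - (hbar X W * (ell Z * (k * ell Y + (1/3) * C Y) + (1/3) * B Z Y
          + (2/3) * ell Y * C Z + k * hbar Z Y)
        + (1/3) * ell Y * C X * hbar Z W
        + L⁻¹ * hbar Y Z * ell W * (k * ell X + (1/3) * C X)))
    {X Y Z W : V} (hX : ell X = 0) (hY : ell Y = 0) (hZ : ell Z = 0) (hW : ell W = 0) :
    R X Y Z W = hbar Y W * ((1/3) * B Z X + k * hbar Z X)
      - hbar X W * ((1/3) * B Z Y + k * hbar Z Y) := by
  rw [hR, hX, hY, hZ, hW]
  ring

theorem stmt_7_general {V : Type*} [NormedAddCommGroup V] [InnerProductSpace ℝ V]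
    [FiniteDimensional ℝ V] (n : ℕ) (hn : Module.finrank ℝ V = n) (hn4 : 4 ≤ n)
    (η : V) (L : ℝ) (hL : 0 < L) (hη : ⟪η, η⟫ = L ^ 2)
    (ell : V → ℝ) (hell : ∀ X, ell X = L⁻¹ * ⟪η, X⟫)
    (φ : V → V) (hφ : ∀ X, φ X = X - (L⁻¹ * ell X) • η)
    (hbar : V → V → ℝ) (hhbar : ∀ X Y, hbar X Y = ⟪X, Y⟫ - ell X * ell Y)
    (k ε : ℝ) (C : V →ₗ[ℝ] ℝ)
    (B : V →ₗ[ℝ] V →ₗ[ℝ] ℝ) (hBind : ∀ X Y, B X Y = B (φ X) (φ Y))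
    (R : V → V → V → V → ℝ)
    (hR : ∀ X Y Z W, R X Y Z W =
      (hbar Y W * (ell Z * (k * ell X + (1/3) * C X) + (1/3) * B Z X
          + (2/3) * ell X * C Z + k * hbar Z X)
        + (1/3) * ell X * C Y * hbar Z W
        + L⁻¹ * hbar X Z * ell W * (k * ell Y + (1/3) * C Y))
      - (hbar X W * (ell Z * (k * ell Y + (1/3) * C Y) + (1/3) * B Z Y
          + (2/3) * ell Y * C Z + k * hbar Z Y)
        + (1/3) * ell Y * C X * hbar Z W
        + L⁻¹ * hbar Y Z * ell W * (k * ell X + (1/3) * C X))) :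
    (∀ X Y Z W, R (φ X) (φ Y) (φ Z) (φ W)
        = ε * (hbar X Z * hbar Y W - hbar Y Z * hbar X W))
    ↔ (∀ X Y, B X Y = 3 * (ε - k) * hbar X Y) := by
  have hellφ := ell_phi_eq_zero hL.ne' hη hell hφ
  have hRφ : ∀ X Y Z W, R (φ X) (φ Y) (φ Z) (φ W) = hbar Y W * ((1/3) * B Z X + k * hbar Z X)
      - hbar X W * ((1/3) * B Z Y + k * hbar Z Y) := by
    intro X Y Z W
    simp only [R_eq_of_ell_eq_zero hR (hellφ X) (hellφ Y) (hellφ Z) (hellφ W),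
      hbar_phi_phi hL.ne' hη hell hφ hhbar, ← hBind]
  simp only [hRφ]
  constructor
  · intro h X Y
    obtain ⟨v, hv0, hηv, hYv⟩ :=
      exists_ne_zero_inner_eq_zero_inner_eq_zero (by omega) η Y
    have hellv : ell v = 0 := by rw [hell, hηv, mul_zero]
    have hYv' : hbar Y v = 0 := by rw [hhbar, hYv, hellv, mul_zero, sub_zero]
    have hvv := h Y v X v
    rw [hYv', hbar_comm hhbar Y X] at hvv
    have hscaled : hbar v v * ((1/3) * B X Y + k * hbar X Y) = hbar v v * (ε * hbar X Y) := by
      linarith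
    linarith [mul_left_cancel₀ (hbar_self_ne_zero hhbar hv0 hellv) hscaled]
  · intro h X Y Z W
    rw [h Z X, h Z Y, hbar_comm hhbar Z X, hbar_comm hhbar Z Y]
    ring

theorem stmt_7 {V : Type*} [NormedAddCommGroup V] [InnerProductSpace ℝ V]
    [FiniteDimensional ℝ V] (n : ℕ) (hn : Module.finrank ℝ V = n) (hn4 : 4 ≤ n)
    (η : V) (L : ℝ) (hL : 0 < L) (hη : ⟪η, η⟫ = L ^ 2)
    (ell : V → ℝ) (hell : ∀ X, ell X = L⁻¹ * ⟪η, X⟫)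
    (φ : V → V) (hφ : ∀ X, φ X = X - (L⁻¹ * ell X) • η)
    (hbar : V → V → ℝ) (hhbar : ∀ X Y, hbar X Y = ⟪X, Y⟫ - ell X * ell Y)
    (k ε : ℝ) (C : V →ₗ[ℝ] ℝ) (hCη : C η = 0)
    (B : V →ₗ[ℝ] V →ₗ[ℝ] ℝ) (hBind : ∀ X Y, B X Y = B (φ X) (φ Y))
    (hBsymm : ∀ X Y, B X Y = B Y X)
    (R : V → V → V → V → ℝ)
    (hR : ∀ X Y Z W, R X Y Z W =
      (hbar Y W * (ell Z * (k * ell X + (1/3) * C X) + (1/3) * B Z X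
          + (2/3) * ell X * C Z + k * hbar Z X)
        + (1/3) * ell X * C Y * hbar Z W
        + L⁻¹ * hbar X Z * ell W * (k * ell Y + (1/3) * C Y))
      - (hbar X W * (ell Z * (k * ell Y + (1/3) * C Y) + (1/3) * B Z Y
          + (2/3) * ell Y * C Z + k * hbar Z Y)
        + (1/3) * ell Y * C X * hbar Z W
        + L⁻¹ * hbar Y Z * ell W * (k * ell X + (1/3) * C X))) :
    (∀ X Y Z W, R (φ X) (φ Y) (φ Z) (φ W)
        = ε * (hbar X Z * hbar Y W - hbar Y Z * hbar X W))
    ↔ (∀ X Y, B X Y = 3 * (ε - k) * hbar X Y) :=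
  stmt_7_general n hn hn4 η L hL hη ell hell φ hφ hbar hhbar k ε C B hBind R hR
end

section
/- Let V, g, η, L, ℓ, φ, ħ be as above and let Q be a quadrilinear form on V satisfying Q(X,Y,Z,W) = q{ ħ(X,Z)ħ(Y,W) − ħ(X,W)ħ(Y,Z) } for a scalar q. If R and R̊ are quadrilinear forms related by R(X,Y,Z,W) = (1/2){R̊(X,Y,Z,W) − R̊(X,Y,W,Z)} − Q(X,Y,Z,W), and R̊ is of H_p-scalar-curvature type with scalar k, i.e. (P·R̊)(X,Y,Z,W) = k·𝔄_{X,Y}{ħ(X,Z)ħ(Y,W)}, then (P·R)(X,Y,Z,W) = (k − q){ ħ(X,Z)ħ(Y,W) − ħ(X,W)ħ(Y,Z) }. -/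
/-!
Normalise `η` to the unit vector `u = L⁻¹ • η`. Then `ℓ = ⟪u, ·⟫`, `φ` is the orthogonal projection
onto `u⊥`, and `ħ(X, Y) = ⟪φ X, φ Y⟫`; in particular `ħ` is invariant under `φ`, so the quadrilinear
form `ħ(X,Z)ħ(Y,W) − ħ(X,W)ħ(Y,Z)` (which is antisymmetric in `Z, W`) is fixed by `P`. Applying `P` to
the relation between `R` and `R̊` therefore gives `½(k + k) − q = k − q` times that form.
-/

open RealInnerProductSpace

namespace UnitVector

variable {V : Type*} [NormedAddCommGroup V] [InnerProductSpace ℝ V]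

def perpProj (u X : V) : V := X - ⟪u, X⟫ • u

def angularForm (u X Y : V) : ℝ := ⟪X, Y⟫ - ⟪u, X⟫ * ⟪u, Y⟫

variable {u : V}

theorem inner_perpProj (hu : ⟪u, u⟫ = 1) (X : V) : ⟪u, perpProj u X⟫ = 0 := by
  rw [perpProj, inner_sub_right, real_inner_smul_right, hu, mul_one, sub_self]

theorem inner_perpProj_perpProj (hu : ⟪u, u⟫ = 1) (X Y : V) :
    ⟪perpProj u X, perpProj u Y⟫ = angularForm u X Y := by
  rw [perpProj, inner_sub_left, real_inner_smul_left, inner_perpProj hu, mul_zero, sub_zero,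
    perpProj, inner_sub_right, real_inner_smul_right, real_inner_comm u X, angularForm, mul_comm]

theorem angularForm_perpProj (hu : ⟪u, u⟫ = 1) (X Y : V) :
    angularForm u (perpProj u X) (perpProj u Y) = angularForm u X Y := by
  rw [angularForm, inner_perpProj hu, inner_perpProj hu, mul_zero, sub_zero,
    inner_perpProj_perpProj hu]

end UnitVector

open UnitVector

theorem stmt_13 {V : Type*} [NormedAddCommGroup V] [InnerProductSpace ℝ V]
    (η : V) (L : ℝ) (hL : 0 < L) (hη : ⟪η, η⟫ = L ^ 2)
    (ell : V → ℝ) (hell : ∀ X, ell X = L⁻¹ * ⟪η, X⟫)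
    (φ : V → V) (hφ : ∀ X, φ X = X - (L⁻¹ * ell X) • η)
    (hbar : V → V → ℝ) (hhbar : ∀ X Y, hbar X Y = ⟪X, Y⟫ - ell X * ell Y)
    (q k : ℝ) (Q R R₀ : V → V → V → V → ℝ)
    (hQ : ∀ X Y Z W, Q X Y Z W = q * (hbar X Z * hbar Y W - hbar X W * hbar Y Z))
    (hrel : ∀ X Y Z W, R X Y Z W = (1/2) * (R₀ X Y Z W - R₀ X Y W Z) - Q X Y Z W)
    (hHp : ∀ X Y Z W, R₀ (φ X) (φ Y) (φ Z) (φ W)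
      = k * (hbar X Z * hbar Y W - hbar Y Z * hbar X W)) :
    ∀ X Y Z W, R (φ X) (φ Y) (φ Z) (φ W)
      = (k - q) * (hbar X Z * hbar Y W - hbar X W * hbar Y Z) := by
  set u : V := L⁻¹ • η
  have hu : ⟪u, u⟫ = 1 := by
    rw [real_inner_smul_left, real_inner_smul_right, hη]
    field_simp
  have hell_u (X : V) : ell X = ⟪u, X⟫ := by rw [hell, real_inner_smul_left]
  have hφ_u : φ = perpProj u := funext fun X => by
    rw [hφ, perpProj, ← hell_u, mul_comm, mul_smul]
  have hbar_u : hbar = angularForm u := funext₂ fun X Y => by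
    rw [hhbar, angularForm, hell_u, hell_u]
  subst hφ_u hbar_u
  intro X Y Z W
  rw [hrel, hQ, hHp, hHp, angularForm_perpProj hu, angularForm_perpProj hu,
    angularForm_perpProj hu, angularForm_perpProj hu]
  ring
end
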